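/- arXiv:1603.02378 — 4 statements merged into one kernel-verified Lean document; each statement's English description precedes it below -/
import Mathlib

section
/- Let Cap a > 0 for every arc a ∈ A. Let Aᵏ be a simple cut-set and let Aˡ be any cut-set with Aˡ ≠ Aᵏ. Then there exists a function y : A → ℝ taking only the values 0 and 1 such that Σ_{a ∈ Aᵏ} Cap a · y a < Σ_{a ∈ Aˡ} Cap a · y a. Consequently the Benders cut generated by Aᵏ is not dominated by the Benders cut generated by Aˡ; since Aˡ was arbitrary, the Benders cut generated by a simple cut-set is Pareto-optimal. -/
open Finset

/-- The arcs traversed by a path given as a list of vertices. -/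
def pathArcs {V : Type*} (p : List V) : List (V × V) := p.zip p.tail

/-- `p` is a directed path from `s` to `t` in the network with arc set `A`. -/
def IsPath {V : Type*} (A : Finset (V × V)) (s t : V) (p : List V) : Prop :=
  p.head? = some s ∧ p.getLast? = some t ∧ ∀ a ∈ pathArcs p, a ∈ A

/-- `S` is a cut-set: every directed path from `s` to `t` contains an arc of `S`. -/
def IsCutSet {V : Type*} (A : Finset (V × V)) (s t : V) (S : Finset (V × V)) : Prop :=
  S ⊆ A ∧ ∀ p : List V, IsPath A s t p → ∃ a ∈ S, a ∈ pathArcs p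

/-- A simple cut-set: removing any arc destroys the cut-set property. -/
def IsSimpleCutSet {V : Type*} [DecidableEq V] (A : Finset (V × V)) (s t : V)
    (S : Finset (V × V)) : Prop :=
  IsCutSet A s t S ∧ ∀ a ∈ S, ¬ IsCutSet A s t (S.erase a)

/-- `y` takes only the values 0 and 1. -/
def IsBinary {V : Type*} (y : V × V → ℝ) : Prop := ∀ a, y a = 0 ∨ y a = 1

/-- The Benders cut generated by `S'` dominates the one generated by `S`. -/
def Dominates {V : Type*} (Cap : V × V → ℝ) (S' S : Finset (V × V)) : Prop :=
  (∀ y : V × V → ℝ, IsBinary y → ∑ a ∈ S', Cap a * y a ≤ ∑ a ∈ S, Cap a * y a) ∧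
  ∃ y : V × V → ℝ, IsBinary y ∧ ∑ a ∈ S', Cap a * y a < ∑ a ∈ S, Cap a * y a

/-- The Benders cut generated by the cut-set `S` is Pareto-optimal. -/
def BendersParetoOptimal {V : Type*} (A : Finset (V × V)) (s t : V) (Cap : V × V → ℝ)
    (S : Finset (V × V)) : Prop :=
  ∀ S' : Finset (V × V), IsCutSet A s t S' → S' ≠ S → ¬ Dominates Cap S' S

/-! If every arc of a cut-set `Al ≠ Ak` lay in the simple cut-set `Ak`, then `Al` would be a cut-set
strictly inside `Ak`, and so would `Ak` minus an arc of `Ak \ Al`. Hence some arc `a` lies in `Al` but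
not in `Ak`, and the indicator of `a` gives the `Ak`-cut the value `0` and the `Al`-cut the value
`Cap a > 0`. -/

section CutSet

variable {V : Type*} {A : Finset (V × V)} {s t : V}

theorem IsCutSet.mono {S T : Finset (V × V)} (hS : IsCutSet A s t S) (hST : S ⊆ T) (hT : T ⊆ A) :
    IsCutSet A s t T :=
  ⟨hT, fun p hp => (hS.2 p hp).imp fun _ ⟨ha, hap⟩ => ⟨hST ha, hap⟩⟩

theorem IsSimpleCutSet.eq_of_subset [DecidableEq V] {S T : Finset (V × V)}
    (hS : IsSimpleCutSet A s t S) (hT : IsCutSet A s t T) (hTS : T ⊆ S) : T = S := by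
  by_contra hne
  obtain ⟨a, haS, haT⟩ := Finset.exists_of_ssubset (hTS.ssubset_of_ne hne)
  exact hS.2 a haS <| hT.mono (Finset.subset_erase.mpr ⟨hTS, haT⟩)
    ((Finset.erase_subset a S).trans hS.1.1)

theorem IsSimpleCutSet.exists_mem_not_mem [DecidableEq V] {S T : Finset (V × V)}
    (hS : IsSimpleCutSet A s t S) (hT : IsCutSet A s t T) (hne : T ≠ S) : ∃ a ∈ T, a ∉ S :=
  Finset.not_subset.mp fun hTS => hne (hS.eq_of_subset hT hTS)

end CutSet

section BendersCut

variable {V : Type*} [DecidableEq V] (Cap : V × V → ℝ)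

theorem isBinary_ite_eq (a : V × V) : IsBinary fun b => if b = a then (1 : ℝ) else 0 := by
  intro b
  by_cases h : b = a <;> simp [h]

theorem sum_mul_ite_eq (S : Finset (V × V)) (a : V × V) :
    ∑ b ∈ S, Cap b * (if b = a then 1 else 0) = if a ∈ S then Cap a else 0 := by
  simp only [mul_ite, mul_one, mul_zero, Finset.sum_ite_eq']

theorem exists_isBinary_sum_lt_of_mem_of_not_mem {S T : Finset (V × V)} {a : V × V}
    (haT : a ∈ T) (haS : a ∉ S) (hCap : 0 < Cap a) :
    ∃ y : V × V → ℝ, IsBinary y ∧ ∑ b ∈ S, Cap b * y b < ∑ b ∈ T, Cap b * y b :=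
  ⟨_, isBinary_ite_eq a, by simpa only [sum_mul_ite_eq, haT, haS, if_true, if_false] using hCap⟩

end BendersCut

theorem not_dominates_of_exists_sum_lt {V : Type*} {Cap : V × V → ℝ} {S T : Finset (V × V)}
    (h : ∃ y : V × V → ℝ, IsBinary y ∧ ∑ a ∈ S, Cap a * y a < ∑ a ∈ T, Cap a * y a) :
    ¬ Dominates Cap T S := by
  obtain ⟨y, hy, hlt⟩ := h
  exact fun hdom => (hdom.1 y hy).not_gt hlt

section SimpleCutSet

variable {V : Type*} [DecidableEq V] {A : Finset (V × V)} {s t : V} {Cap : V × V → ℝ}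
  {S : Finset (V × V)}

theorem IsSimpleCutSet.exists_isBinary_sum_lt (hS : IsSimpleCutSet A s t S)
    (hCap : ∀ a ∈ A, 0 < Cap a) {T : Finset (V × V)} (hT : IsCutSet A s t T) (hne : T ≠ S) :
    ∃ y : V × V → ℝ, IsBinary y ∧ ∑ a ∈ S, Cap a * y a < ∑ a ∈ T, Cap a * y a := by
  obtain ⟨a, haT, haS⟩ := hS.exists_mem_not_mem hT hne
  exact exists_isBinary_sum_lt_of_mem_of_not_mem Cap haT haS (hCap a (hT.1 haT))

theorem IsSimpleCutSet.bendersParetoOptimal (hS : IsSimpleCutSet A s t S)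
    (hCap : ∀ a ∈ A, 0 < Cap a) : BendersParetoOptimal A s t Cap S :=
  fun _ hT hne => not_dominates_of_exists_sum_lt (hS.exists_isBinary_sum_lt hCap hT hne)

end SimpleCutSet

theorem stmt_0_general {V : Type*} [DecidableEq V] (A : Finset (V × V)) (s t : V)
    (Cap : V × V → ℝ) (hCap : ∀ a ∈ A, 0 < Cap a)
    (Ak Al : Finset (V × V)) (hAk : IsSimpleCutSet A s t Ak) (hAl : IsCutSet A s t Al)
    (hne : Al ≠ Ak) :
    (∃ y : V × V → ℝ, IsBinary y ∧
      ∑ a ∈ Ak, Cap a * y a < ∑ a ∈ Al, Cap a * y a) ∧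
    ¬ Dominates Cap Al Ak ∧
    BendersParetoOptimal A s t Cap Ak := by
  have hlt := hAk.exists_isBinary_sum_lt hCap hAl hne
  exact ⟨hlt, not_dominates_of_exists_sum_lt hlt, hAk.bendersParetoOptimal hCap⟩

/-- The Benders cut generated by a simple cut-set `Ak` is not dominated by the Benders cut
generated by any other cut-set `Al`; hence it is Pareto-optimal. -/
theorem stmt_0 {V : Type*} [Fintype V] [DecidableEq V] (A : Finset (V × V)) (s t : V)
    (hst : s ≠ t) (Cap : V × V → ℝ) (hCap : ∀ a ∈ A, 0 < Cap a)
    (Ak Al : Finset (V × V)) (hAk : IsSimpleCutSet A s t Ak) (hAl : IsCutSet A s t Al)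
    (hne : Al ≠ Ak) :
    (∃ y : V × V → ℝ, IsBinary y ∧
      ∑ a ∈ Ak, Cap a * y a < ∑ a ∈ Al, Cap a * y a) ∧
    ¬ Dominates Cap Al Ak ∧
    BendersParetoOptimal A s t Cap Ak :=
  stmt_0_general A s t Cap hCap Ak Al hAk hAl hne
end

section
/- Suppose Cap a ≥ 0 for every arc a ∈ A. Then there exist a flow x* feasible for Cap and a simple cut-set S* such that: the value of x* equals Σ_{a ∈ S*} Cap a; every flow x feasible for Cap has value at most the value of x*; and Σ_{a ∈ S*} Cap a ≤ Σ_{a ∈ S} Cap a for every simple cut-set S. That is, the maximum possible flow from the source to the sink equals the minimum value among all simple cut-sets. -/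
open Finset

/-- `x` is a flow feasible for the capacity function `c`. -/
def IsFeasibleFlow {V : Type*} [DecidableEq V] (A : Finset (V × V)) (s t : V)
    (c x : V × V → ℝ) : Prop :=
  (∀ a ∈ A, 0 ≤ x a ∧ x a ≤ c a) ∧
  ∀ v : V, v ≠ s → v ≠ t →
    ∑ a ∈ A.filter (fun a => a.2 = v), x a = ∑ a ∈ A.filter (fun a => a.1 = v), x a

/-- The value of a flow: net flow out of the source `s`. -/
def flowValue {V : Type*} [DecidableEq V] (A : Finset (V × V)) (s : V)
    (x : V × V → ℝ) : ℝ :=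
  ∑ a ∈ A.filter (fun a => a.1 = s), x a - ∑ a ∈ A.filter (fun a => a.2 = s), x a


/-!
A maximum flow `x` exists because the value is continuous and the feasible flows vanishing
off `A` form a compact set. Let `R` be the set of vertices reachable from `s` in the
residual network of `x`. If `t ∈ R`, a residual walk from `s` to `t` gives a direction `f`
(unit net outflow at `s`, conserved elsewhere) along which `x + ε f` stays feasible for small
`ε > 0`, contradicting maximality. So `t ∉ R`, and `x` saturates every arc leaving `R` and
vanishes on every arc entering `R`: its value is the capacity of the cut-set of arcs leaving
`R`. Conversely every cut-set `S` bounds every flow value (take for `R` the vertices reachable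
from `s` avoiding `S`), so a simple cut-set inside the cut of `R` has exactly the value of `x`.
-/

namespace MaxFlowMinCut

open Relation Filter Topology

section Paths

variable {V : Type*}

lemma pathArcs_cons_cons (u v : V) (p : List V) :
    pathArcs (u :: v :: p) = (u, v) :: pathArcs (v :: p) := rfl

lemma exists_path_of_reflTransGen {r : V → V → Prop} {u w : V} (h : ReflTransGen r u w) :
    ∃ p : List V, p.head? = some u ∧ p.getLast? = some w ∧ ∀ a ∈ pathArcs p, r a.1 a.2 := by
  induction h using ReflTransGen.head_induction_on with
  | refl => exact ⟨[w], rfl, rfl, by simp [pathArcs]⟩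
  | head hub _ ih =>
    obtain ⟨_ | ⟨b, q⟩, hhead, hlast, harcs⟩ := ih
    · simp at hhead
    · obtain rfl : b = _ := Option.some_inj.1 hhead
      refine ⟨_ :: b :: q, rfl, by rwa [List.getLast?_cons_cons], ?_⟩
      rw [pathArcs_cons_cons]
      exact List.forall_mem_cons.2 ⟨hub, harcs⟩

lemma exists_mem_pathArcs_of_head_of_getLast (P : V → Prop) :
    ∀ (p : List V) {u w : V}, p.head? = some u → p.getLast? = some w → P u → ¬ P w →
      ∃ a ∈ pathArcs p, P a.1 ∧ ¬ P a.2
  | [], _, _, hhead, _, _, _ => by simp at hhead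
  | [v], _, _, hhead, hlast, hu, hw => by
    simp only [List.head?_cons, List.getLast?_singleton, Option.some_inj] at hhead hlast
    subst hhead hlast
    exact absurd hu hw
  | v :: b :: q, _, w, hhead, hlast, hu, hw => by
    obtain rfl := Option.some_inj.1 hhead
    rw [pathArcs_cons_cons]
    by_cases hb : P b
    · obtain ⟨a, ha, hPa⟩ := exists_mem_pathArcs_of_head_of_getLast P (b :: q) rfl
        (by rwa [List.getLast?_cons_cons] at hlast) hb hw
      exact ⟨a, List.mem_cons_of_mem _ ha, hPa⟩
    · exact ⟨(v, b), List.mem_cons_self, hu, hb⟩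

section Reachability

variable [Fintype V]

open Classical in
noncomputable def reachSet (r : V → V → Prop) (s : V) : Finset V :=
  univ.filter (ReflTransGen r s)

variable {r : V → V → Prop} {s : V}

lemma mem_reachSet {v : V} : v ∈ reachSet r s ↔ ReflTransGen r s v := by
  simp [reachSet]

lemma start_mem_reachSet : s ∈ reachSet r s := mem_reachSet.2 .refl

lemma not_rel_of_mem_reachSet {u v : V} (hu : u ∈ reachSet r s) (hv : v ∉ reachSet r s) :
    ¬ r u v :=
  fun huv => hv (mem_reachSet.2 ((mem_reachSet.1 hu).tail huv))

end Reachability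

end Paths

section Residual

variable {V : Type*} {A : Finset (V × V)} {c x f g : V × V → ℝ}

def residual (A : Finset (V × V)) (c x : V × V → ℝ) (u v : V) : Prop :=
  ((u, v) ∈ A ∧ x (u, v) < c (u, v)) ∨ ((v, u) ∈ A ∧ 0 < x (v, u))

def IsAugmenting (A : Finset (V × V)) (c x f : V × V → ℝ) : Prop :=
  ∀ a, (0 < f a → a ∈ A ∧ x a < c a) ∧ (f a < 0 → a ∈ A ∧ 0 < x a)

lemma isAugmenting_zero : IsAugmenting A c x 0 :=
  fun _ => ⟨fun h => (lt_irrefl _ h).elim, fun h => (lt_irrefl _ h).elim⟩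

lemma IsAugmenting.add (hf : IsAugmenting A c x f) (hg : IsAugmenting A c x g) :
    IsAugmenting A c x (f + g) := by
  intro a
  constructor <;> intro h <;> simp only [Pi.add_apply] at h
  · rcases lt_or_ge 0 (f a) with hfa | hfa
    · exact (hf a).1 hfa
    · exact (hg a).1 (by linarith)
  · rcases lt_or_ge (f a) 0 with hfa | hfa
    · exact (hf a).2 hfa
    · exact (hg a).2 (by linarith)

lemma IsAugmenting.exists_pos_mem_Icc (hf : IsAugmenting A c x f)
    (hx : ∀ a ∈ A, 0 ≤ x a ∧ x a ≤ c a) :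
    ∃ ε > 0, ∀ a ∈ A, 0 ≤ x a + ε * f a ∧ x a + ε * f a ≤ c a := by
  suffices ∀ a ∈ A, ∀ᶠ ε in 𝓝[>] (0 : ℝ), 0 ≤ x a + ε * f a ∧ x a + ε * f a ≤ c a by
    obtain ⟨ε, hε, hA⟩ := (eventually_mem_nhdsWithin.and ((eventually_all_finset A).2 this)).exists
    exact ⟨ε, hε, hA⟩
  intro a ha
  have hlim : Tendsto (fun ε => x a + ε * f a) (𝓝[>] 0) (𝓝 (x a)) :=
    (Continuous.tendsto' (by fun_prop) 0 (x a) (by simp)).mono_left nhdsWithin_le_nhds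
  rcases lt_trichotomy (f a) 0 with hneg | hzero | hpos
  · filter_upwards [hlim.eventually (lt_mem_nhds ((hf a).2 hneg).2), self_mem_nhdsWithin]
      with ε hlow hε
    exact ⟨hlow.le, by nlinarith [(hx a ha).2, hε.out]⟩
  · exact .of_forall fun ε => by simpa [hzero] using hx a ha
  · filter_upwards [hlim.eventually (gt_mem_nhds ((hf a).1 hpos).2), self_mem_nhdsWithin]
      with ε hup hε
    exact ⟨by nlinarith [(hx a ha).1, hε.out], hup.le⟩

end Residual

section Networks

variable {V : Type*} [DecidableEq V] {A : Finset (V × V)} {s t : V} {c x y f g : V × V → ℝ}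

def netOutflow (A : Finset (V × V)) (x : V × V → ℝ) (v : V) : ℝ :=
  ∑ a ∈ A.filter (fun a => a.1 = v), x a - ∑ a ∈ A.filter (fun a => a.2 = v), x a

lemma flowValue_eq_netOutflow : flowValue A s x = netOutflow A x s := rfl

lemma netOutflow_add (v : V) : netOutflow A (f + g) v = netOutflow A f v + netOutflow A g v := by
  simp only [netOutflow, Pi.add_apply, sum_add_distrib]
  ring

lemma netOutflow_smul (ε : ℝ) (v : V) : netOutflow A (ε • f) v = ε * netOutflow A f v := by
  simp only [netOutflow, Pi.smul_apply, smul_eq_mul, ← mul_sum, mul_sub]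

lemma netOutflow_neg (v : V) : netOutflow A (-f) v = -netOutflow A f v := by
  simpa using netOutflow_smul (A := A) (f := f) (-1) v

lemma netOutflow_single {e : V × V} (he : e ∈ A) (v : V) :
    netOutflow A (Pi.single e 1) v = (if v = e.1 then 1 else 0) - (if v = e.2 then 1 else 0) := by
  simp [netOutflow, sum_pi_single', he, eq_comm]

lemma netOutflow_congr (h : ∀ a ∈ A, x a = y a) (v : V) : netOutflow A x v = netOutflow A y v := by
  unfold netOutflow
  rw [sum_congr rfl fun a ha => h a (mem_filter.1 ha).1,
    sum_congr rfl fun a ha => h a (mem_filter.1 ha).1]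

lemma isFeasibleFlow_iff : IsFeasibleFlow A s t c x ↔
    (∀ a ∈ A, 0 ≤ x a ∧ x a ≤ c a) ∧ ∀ v, v ≠ s → v ≠ t → netOutflow A x v = 0 := by
  unfold IsFeasibleFlow netOutflow
  simp only [sub_eq_zero]
  exact and_congr_right fun _ => forall₃_congr fun _ _ _ => eq_comm

lemma IsFeasibleFlow.congr (hx : IsFeasibleFlow A s t c x) (h : ∀ a ∈ A, x a = y a) :
    IsFeasibleFlow A s t c y := by
  rw [isFeasibleFlow_iff] at hx ⊢
  refine ⟨fun a ha => h a ha ▸ hx.1 a ha, fun v hs ht => ?_⟩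
  rw [← netOutflow_congr h, hx.2 v hs ht]

lemma isClosed_setOf_isFeasibleFlow : IsClosed {x | IsFeasibleFlow A s t c x} := by
  simp only [IsFeasibleFlow, Set.ofPred_and, Set.ofPred_forall]
  refine .inter (isClosed_iInter fun a => isClosed_iInter fun _ => .inter ?_ ?_)
    (isClosed_iInter fun v => isClosed_iInter fun _ => isClosed_iInter fun _ => ?_)
  · exact isClosed_le continuous_const (continuous_apply a)
  · exact isClosed_le (continuous_apply a) continuous_const
  · exact isClosed_eq (by fun_prop) (by fun_prop)

lemma continuous_flowValue : Continuous (flowValue A s) := by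
  unfold flowValue
  fun_prop

def leaving (A : Finset (V × V)) (R : Finset V) : Finset (V × V) :=
  A.filter fun a => a.1 ∈ R ∧ a.2 ∉ R

def entering (A : Finset (V × V)) (R : Finset V) : Finset (V × V) :=
  A.filter fun a => a.1 ∉ R ∧ a.2 ∈ R

lemma sum_netOutflow (x : V × V → ℝ) (R : Finset V) :
    ∑ v ∈ R, netOutflow A x v = ∑ a ∈ leaving A R, x a - ∑ a ∈ entering A R, x a := by
  have hout : ∑ a ∈ A.filter (fun a => a.1 ∈ R), x a
      = ∑ a ∈ A.filter (fun a => a.1 ∈ R ∧ a.2 ∈ R), x a + ∑ a ∈ leaving A R, x a := by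
    rw [← sum_filter_add_sum_filter_not (A.filter _) (fun a => a.2 ∈ R), filter_filter,
      filter_filter, leaving]
  have hin : ∑ a ∈ A.filter (fun a => a.2 ∈ R), x a
      = ∑ a ∈ A.filter (fun a => a.1 ∈ R ∧ a.2 ∈ R), x a + ∑ a ∈ entering A R, x a := by
    rw [← sum_filter_add_sum_filter_not (A.filter _) (fun a => a.1 ∈ R), filter_filter,
      filter_filter, entering]
    congr 2 <;> ext a <;> simp [and_comm]
  simp only [netOutflow, sum_sub_distrib, sum_fiberwise_eq_sum_filter, hout, hin]
  ring

lemma flowValue_eq_sum_leaving_sub_sum_entering (hx : IsFeasibleFlow A s t c x) {R : Finset V}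
    (hs : s ∈ R) (ht : t ∉ R) :
    flowValue A s x = ∑ a ∈ leaving A R, x a - ∑ a ∈ entering A R, x a := by
  rw [← sum_netOutflow, sum_eq_single_of_mem s hs fun v hv hvs =>
    (isFeasibleFlow_iff.1 hx).2 v hvs (ne_of_mem_of_not_mem hv ht)]
  rfl

lemma flowValue_le_sum_leaving (hx : IsFeasibleFlow A s t c x) {R : Finset V}
    (hs : s ∈ R) (ht : t ∉ R) : flowValue A s x ≤ ∑ a ∈ leaving A R, c a := by
  rw [flowValue_eq_sum_leaving_sub_sum_entering hx hs ht]
  have hin : 0 ≤ ∑ a ∈ entering A R, x a :=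
    sum_nonneg fun a ha => (hx.1 a (mem_filter.1 ha).1).1
  have hout : ∑ a ∈ leaving A R, x a ≤ ∑ a ∈ leaving A R, c a :=
    sum_le_sum fun a ha => (hx.1 a (mem_filter.1 ha).1).2
  linarith

lemma isCutSet_leaving {R : Finset V} (hs : s ∈ R) (ht : t ∉ R) :
    IsCutSet A s t (leaving A R) := by
  refine ⟨filter_subset _ _, fun p ⟨hhead, hlast, harcs⟩ => ?_⟩
  obtain ⟨a, ha, hR⟩ := exists_mem_pathArcs_of_head_of_getLast (· ∈ R) p hhead hlast hs ht
  exact ⟨a, mem_filter.2 ⟨harcs a ha, hR⟩, ha⟩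

lemma IsCutSet.exists_isSimpleCutSet_subset {S : Finset (V × V)} (hS : IsCutSet A s t S) :
    ∃ S' ⊆ S, IsSimpleCutSet A s t S' := by
  induction S using Finset.strongInduction with
  | H S ih =>
    by_cases hshrink : ∃ a ∈ S, IsCutSet A s t (S.erase a)
    · obtain ⟨a, ha, hcut⟩ := hshrink
      obtain ⟨S', hsub, hS'⟩ := ih _ (erase_ssubset ha) hcut
      exact ⟨S', hsub.trans (erase_subset a S), hS'⟩
    · exact ⟨S, subset_rfl, hS, fun a ha hcut => hshrink ⟨a, ha, hcut⟩⟩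

theorem flowValue_le_sum_of_isCutSet [Fintype V] (hc : ∀ a ∈ A, 0 ≤ c a)
    (hx : IsFeasibleFlow A s t c x) {S : Finset (V × V)} (hS : IsCutSet A s t S) :
    flowValue A s x ≤ ∑ a ∈ S, c a := by
  set R := reachSet (fun u v => (u, v) ∈ A ∧ (u, v) ∉ S) s
  have ht : t ∉ R := fun ht => by
    obtain ⟨p, hhead, hlast, harcs⟩ := exists_path_of_reflTransGen (mem_reachSet.1 ht)
    obtain ⟨a, haS, ha⟩ := hS.2 p ⟨hhead, hlast, fun a ha => (harcs a ha).1⟩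
    exact (harcs a ha).2 haS
  have hsub : leaving A R ⊆ S := fun a ha => by
    obtain ⟨haA, h1, h2⟩ := mem_filter.1 ha
    by_contra haS
    exact not_rel_of_mem_reachSet h1 h2 ⟨haA, haS⟩
  calc flowValue A s x ≤ ∑ a ∈ leaving A R, c a := flowValue_le_sum_leaving hx start_mem_reachSet ht
    _ ≤ ∑ a ∈ S, c a := sum_le_sum_of_subset_of_nonneg hsub fun a ha _ => hc a (hS.1 ha)

def IsMaxFlow (A : Finset (V × V)) (s t : V) (c x : V × V → ℝ) : Prop :=
  IsFeasibleFlow A s t c x ∧ ∀ y, IsFeasibleFlow A s t c y → flowValue A s y ≤ flowValue A s x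

theorem exists_isMaxFlow (hc : ∀ a ∈ A, 0 ≤ c a) : ∃ x, IsMaxFlow A s t c x := by
  set box : Set (V × V → ℝ) := Set.Icc 0 fun a => if a ∈ A then c a else 0
  have hK : IsCompact (box ∩ {x | IsFeasibleFlow A s t c x}) :=
    isCompact_Icc.inter_right isClosed_setOf_isFeasibleFlow
  have hzero : (0 : V × V → ℝ) ∈ box ∩ {x | IsFeasibleFlow A s t c x} :=
    ⟨⟨le_rfl, fun a => by by_cases ha : a ∈ A <;> simp [ha, hc]⟩,
      fun a ha => ⟨le_rfl, hc a ha⟩, fun _ _ _ => by simp⟩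
  obtain ⟨x, ⟨-, hx⟩, hmax⟩ := hK.exists_isMaxOn ⟨0, hzero⟩ continuous_flowValue.continuousOn
  refine ⟨x, hx, fun y hy => ?_⟩
  -- only the values on `A` matter, so `y` may be moved into the box
  set y' : V × V → ℝ := fun a => if a ∈ A then y a else 0
  have hyy' : ∀ a ∈ A, y a = y' a := fun a ha => (if_pos ha).symm
  have hy' : y' ∈ box := ⟨fun a => by by_cases ha : a ∈ A <;> simp [y', ha, hy.1],
    fun a => by by_cases ha : a ∈ A <;> simp [y', ha, hy.1]⟩
  calc flowValue A s y = flowValue A s y' := netOutflow_congr hyy' s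
    _ ≤ flowValue A s x := hmax ⟨hy', IsFeasibleFlow.congr hy hyy'⟩

lemma exists_isAugmenting_of_residual {u v : V} (h : residual A c x u v) :
    ∃ f, IsAugmenting A c x f ∧
      ∀ w, netOutflow A f w = (if w = u then 1 else 0) - (if w = v then 1 else 0) := by
  rcases h with ⟨hA, hlt⟩ | ⟨hA, hpos⟩
  · refine ⟨Pi.single (u, v) 1, fun a => ⟨fun ha => ?_, fun ha => ?_⟩, netOutflow_single hA⟩
    · obtain rfl : a = (u, v) := by by_contra hne; simp [hne] at ha
      exact ⟨hA, hlt⟩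
    · by_cases hne : a = (u, v) <;> norm_num [hne] at ha
  · refine ⟨-Pi.single (v, u) 1, fun a => ⟨fun ha => ?_, fun ha => ?_⟩, fun w => ?_⟩
    · by_cases hne : a = (v, u) <;> norm_num [hne] at ha
    · obtain rfl : a = (v, u) := by by_contra hne; simp [hne] at ha
      exact ⟨hA, hpos⟩
    · rw [netOutflow_neg, netOutflow_single hA]
      ring

lemma exists_isAugmenting_of_reflTransGen {u w : V} (h : ReflTransGen (residual A c x) u w) :
    ∃ f, IsAugmenting A c x f ∧
      ∀ v, netOutflow A f v = (if v = u then 1 else 0) - (if v = w then 1 else 0) := by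
  induction h with
  | refl => exact ⟨0, isAugmenting_zero, fun v => by simp [netOutflow]⟩
  | tail _ hstep ih =>
    obtain ⟨f, hf, hfnet⟩ := ih
    obtain ⟨g, hg, hgnet⟩ := exists_isAugmenting_of_residual hstep
    exact ⟨f + g, hf.add hg, fun v => by rw [netOutflow_add, hfnet, hgnet]; ring⟩

theorem exists_flowValue_lt_of_reflTransGen_residual (hst : s ≠ t)
    (hx : IsFeasibleFlow A s t c x) (h : ReflTransGen (residual A c x) s t) :
    ∃ y, IsFeasibleFlow A s t c y ∧ flowValue A s x < flowValue A s y := by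
  obtain ⟨f, hf, hfnet⟩ := exists_isAugmenting_of_reflTransGen h
  obtain ⟨ε, hε, hbounds⟩ := hf.exists_pos_mem_Icc hx.1
  have hnet : ∀ v, netOutflow A (x + ε • f) v
      = netOutflow A x v + ε * ((if v = s then 1 else 0) - (if v = t then 1 else 0)) :=
    fun v => by rw [netOutflow_add, netOutflow_smul, hfnet]
  refine ⟨x + ε • f, isFeasibleFlow_iff.2 ⟨fun a ha => by simpa using hbounds a ha,
    fun v hvs hvt => ?_⟩, ?_⟩
  · simp [hnet, hvs, hvt, (isFeasibleFlow_iff.1 hx).2 v hvs hvt]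
  · simp [flowValue_eq_netOutflow, hnet, hst, hε]

theorem IsMaxFlow.not_reflTransGen_residual (hst : s ≠ t) (hx : IsMaxFlow A s t c x) :
    ¬ ReflTransGen (residual A c x) s t := fun h =>
  have ⟨y, hy, hlt⟩ := exists_flowValue_lt_of_reflTransGen_residual hst hx.1 h
  (hx.2 y hy).not_gt hlt

theorem flowValue_eq_sum_leaving_reachSet_residual [Fintype V] (hx : IsFeasibleFlow A s t c x)
    (ht : t ∉ reachSet (residual A c x) s) :
    flowValue A s x = ∑ a ∈ leaving A (reachSet (residual A c x) s), c a := by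
  have hsat : ∀ a ∈ leaving A (reachSet (residual A c x) s), x a = c a := fun a ha => by
    obtain ⟨haA, h1, h2⟩ := mem_filter.1 ha
    exact (hx.1 a haA).2.eq_of_not_lt fun hlt => not_rel_of_mem_reachSet h1 h2 (.inl ⟨haA, hlt⟩)
  have hempty : ∀ a ∈ entering A (reachSet (residual A c x) s), x a = 0 := fun a ha => by
    obtain ⟨haA, h1, h2⟩ := mem_filter.1 ha
    exact ((hx.1 a haA).1.eq_of_not_lt fun hpos =>
      not_rel_of_mem_reachSet h2 h1 (.inr ⟨haA, hpos⟩)).symm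
  rw [flowValue_eq_sum_leaving_sub_sum_entering hx start_mem_reachSet ht, sum_congr rfl hsat,
    sum_eq_zero hempty, sub_zero]

end Networks

end MaxFlowMinCut

open MaxFlowMinCut in
/-- Max-flow min-cut: the maximum possible flow from the source to the sink equals the
minimum value among all simple cut-sets. -/
theorem stmt_1 {V : Type*} [Fintype V] [DecidableEq V] (A : Finset (V × V)) (s t : V)
    (hst : s ≠ t) (Cap : V × V → ℝ) (hCap : ∀ a ∈ A, 0 ≤ Cap a) :
    ∃ (xstar : V × V → ℝ) (Sstar : Finset (V × V)),
      IsFeasibleFlow A s t Cap xstar ∧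
      IsSimpleCutSet A s t Sstar ∧
      flowValue A s xstar = ∑ a ∈ Sstar, Cap a ∧
      (∀ x : V × V → ℝ, IsFeasibleFlow A s t Cap x →
        flowValue A s x ≤ flowValue A s xstar) ∧
      (∀ S : Finset (V × V), IsSimpleCutSet A s t S →
        ∑ a ∈ Sstar, Cap a ≤ ∑ a ∈ S, Cap a) := by
  obtain ⟨x, hx⟩ := exists_isMaxFlow (s := s) (t := t) hCap
  set R := reachSet (residual A Cap x) s
  have htR : t ∉ R := fun h => hx.not_reflTransGen_residual hst (mem_reachSet.1 h)
  obtain ⟨S, hSR, hS⟩ := (isCutSet_leaving start_mem_reachSet htR).exists_isSimpleCutSet_subset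
  have hval : flowValue A s x = ∑ a ∈ S, Cap a := by
    refine le_antisymm (flowValue_le_sum_of_isCutSet hCap hx.1 hS.1) ?_
    rw [flowValue_eq_sum_leaving_reachSet_residual hx.1 htR]
    exact sum_le_sum_of_subset_of_nonneg hSR fun a ha _ => hCap a (mem_filter.1 ha).1
  exact ⟨x, S, hx.1, hS, hval, hx.2,
    fun S' hS' => hval ▸ flowValue_le_sum_of_isCutSet hCap hx.1 hS'.1⟩
end

section
/- Suppose Cap a > 0 for every arc a ∈ A. If a set S ⊆ A is not a cut-set, then there exists a flow x feasible for Cap with x a = 0 for every a ∈ S and with value strictly greater than 0. Consequently the inequality value(x) ≤ Σ_{a ∈ S} Cap a · y a fails for the configuration y that is 0 on S and 1 elsewhere, i.e. the Benders cut generated by a set that is not a cut-set is not a valid inequality. -/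
open Finset

/-!
A directed `s`–`t` walk avoiding `S` carries flow: sending one unit along every traversal of an
arc conserves flow at each vertex other than `s` and `t` (every visit enters and leaves once) and
has value `1`, the walk leaving `s` once more than it enters it. Scaled by a small `ε > 0`, this
flow respects the positive capacities, vanishes on `S`, and its value `ε` exceeds the right-hand
side of the Benders cut, which is `0` for the configuration closing exactly `S`.
-/

lemma map_fst_zip_tail {α : Type*} : ∀ l : List α, (l.zip l.tail).map Prod.fst = l.dropLast
  | [] => rfl
  | [_] => rfl
  | a :: b :: l => by simpa using map_fst_zip_tail (b :: l)

lemma map_snd_zip_tail {α : Type*} (l : List α) : (l.zip l.tail).map Prod.snd = l.tail :=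
  List.map_snd_zip (by cases l <;> simp)

lemma sum_filter_count_eq_count_map {α β : Type*} [BEq α] [LawfulBEq α] [DecidableEq β]
    (A : Finset α) (f : α → β) (b : β) :
    ∀ L : List α, (∀ a ∈ L, a ∈ A) → ∑ a ∈ A with f a = b, L.count a = (L.map f).count b
  | [], _ => by simp
  | c :: L, hL => by
      have hc : c ∈ A := hL c List.mem_cons_self
      have ih := sum_filter_count_eq_count_map A f b L fun a ha => hL a (List.mem_cons_of_mem c ha)
      simp only [List.count_cons, sum_add_distrib, ih, List.map_cons]
      congr 1
      classical
      simp [hc]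

lemma count_tail_add_of_head?_eq {α : Type*} [DecidableEq α] {p : List α} {s : α}
    (h : p.head? = some s) (v : α) : p.tail.count v + (if s = v then 1 else 0) = p.count v := by
  obtain ⟨q, rfl⟩ : ∃ q, p = s :: q := by cases p <;> simp_all
  simp [List.count_cons]

lemma count_dropLast_add_of_getLast?_eq {α : Type*} [DecidableEq α] {p : List α} {t : α}
    (h : p.getLast? = some t) (v : α) :
    p.dropLast.count v + (if t = v then 1 else 0) = p.count v := by
  obtain ⟨q, rfl⟩ := List.getLast?_eq_some_iff.1 h
  simp [List.count_append, List.count_singleton]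

lemma exists_pos_forall_mul_le {ι : Type*} (A : Finset ι) (c n : ι → ℝ)
    (hc : ∀ a ∈ A, 0 < c a) : ∃ ε > 0, ∀ a ∈ A, ε * n a ≤ c a := by
  have hsmall : ∀ a ∈ A, ∀ᶠ ε in nhdsWithin (0 : ℝ) (Set.Ioi 0), ε * n a ≤ c a := by
    intro a ha
    have hlim : Filter.Tendsto (fun ε : ℝ => ε * n a) (nhds 0) (nhds 0) := by
      simpa using (Filter.tendsto_id (x := nhds (0 : ℝ))).mul_const (n a)
    exact nhdsWithin_le_nhds (hlim.eventually (ge_mem_nhds (hc a ha)))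
  exact ((Filter.eventually_all_finset A).2 hsmall |>.and self_mem_nhdsWithin).exists.imp
    fun ε h => ⟨h.2, h.1⟩

section WalkFlow

variable {V : Type*} [DecidableEq V]

def walkFlow (p : List V) (a : V × V) : ℝ := (pathArcs p).count a

lemma walkFlow_nonneg (p : List V) (a : V × V) : 0 ≤ walkFlow p a := Nat.cast_nonneg _

lemma walkFlow_eq_zero {p : List V} {a : V × V} (ha : a ∉ pathArcs p) : walkFlow p a = 0 := by
  simp [walkFlow, List.count_eq_zero.2 ha]

variable {A : Finset (V × V)} {s t : V} {p : List V}

lemma sum_walkFlow_in (hp : IsPath A s t p) (v : V) :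
    ∑ a ∈ A with a.2 = v, walkFlow p a = p.tail.count v := by
  simp only [walkFlow]
  rw [← Nat.cast_sum, sum_filter_count_eq_count_map A Prod.snd v _ hp.2.2, pathArcs,
    map_snd_zip_tail]

lemma sum_walkFlow_out (hp : IsPath A s t p) (v : V) :
    ∑ a ∈ A with a.1 = v, walkFlow p a = p.dropLast.count v := by
  simp only [walkFlow]
  rw [← Nat.cast_sum, sum_filter_count_eq_count_map A Prod.fst v _ hp.2.2, pathArcs,
    map_fst_zip_tail]

lemma sum_walkFlow_out_sub_sum_walkFlow_in (hp : IsPath A s t p) (v : V) :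
    ∑ a ∈ A with a.1 = v, walkFlow p a - ∑ a ∈ A with a.2 = v, walkFlow p a =
      (if s = v then 1 else 0) - (if t = v then 1 else 0) := by
  have key : (p.dropLast.count v : ℝ) + (if t = v then 1 else 0) =
      p.tail.count v + (if s = v then 1 else 0) := by
    exact_mod_cast (count_dropLast_add_of_getLast?_eq hp.2.1 v).trans
      (count_tail_add_of_head?_eq hp.1 v).symm
  rw [sum_walkFlow_in hp, sum_walkFlow_out hp]
  linarith

theorem IsPath.exists_isFeasibleFlow (hp : IsPath A s t p) (hst : s ≠ t) {c : V × V → ℝ}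
    (hc : ∀ a ∈ A, 0 < c a) :
    ∃ x, IsFeasibleFlow A s t c x ∧ (∀ a ∉ pathArcs p, x a = 0) ∧ 0 < flowValue A s x := by
  obtain ⟨ε, hε, hεc⟩ := exists_pos_forall_mul_le A c (walkFlow p) hc
  have hnet := sum_walkFlow_out_sub_sum_walkFlow_in hp
  refine ⟨fun a => ε * walkFlow p a,
    ⟨fun a ha => ⟨mul_nonneg hε.le (walkFlow_nonneg p a), hεc a ha⟩, fun v hvs hvt => ?_⟩,
    fun a ha => by simp only [walkFlow_eq_zero ha, mul_zero], ?_⟩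
  · rw [← mul_sum, ← mul_sum, eq_comm, ← sub_eq_zero, ← mul_sub, hnet v]
    simp [Ne.symm hvs, Ne.symm hvt]
  · rw [flowValue, ← mul_sum, ← mul_sum, ← mul_sub, hnet s]
    simpa [hst.symm] using hε

end WalkFlow

theorem stmt_3_general {V : Type*} [DecidableEq V] (A : Finset (V × V)) (s t : V)
    (hst : s ≠ t) (Cap : V × V → ℝ) (hCap : ∀ a ∈ A, 0 < Cap a)
    (S : Finset (V × V)) (hSA : S ⊆ A) (hS : ¬ IsCutSet A s t S) :
    ∃ x : V × V → ℝ, IsFeasibleFlow A s t Cap x ∧ (∀ a ∈ S, x a = 0) ∧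
      0 < flowValue A s x ∧
      ¬ (flowValue A s x ≤ ∑ a ∈ S, Cap a * (if a ∈ S then (0 : ℝ) else 1)) := by
  obtain ⟨p, hp, hpS⟩ : ∃ p, IsPath A s t p ∧ ∀ a ∈ S, a ∉ pathArcs p := by
    simpa [IsCutSet, hSA] using hS
  obtain ⟨x, hx, hx_off, hx_pos⟩ := hp.exists_isFeasibleFlow hst hCap
  have hcut : ∑ a ∈ S, Cap a * (if a ∈ S then (0 : ℝ) else 1) = 0 :=
    sum_eq_zero fun a ha => by simp [ha]
  exact ⟨x, hx, fun a ha => hx_off a (hpS a ha), hx_pos, by rw [hcut]; exact not_le.2 hx_pos⟩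

/-- If `S` is not a cut-set, some feasible flow vanishing on `S` has positive value, so
the Benders cut generated by `S` is not a valid inequality for the configuration that
closes exactly the arcs of `S`. -/
theorem stmt_3 {V : Type*} [Fintype V] [DecidableEq V] (A : Finset (V × V)) (s t : V)
    (hst : s ≠ t) (Cap : V × V → ℝ) (hCap : ∀ a ∈ A, 0 < Cap a)
    (S : Finset (V × V)) (hSA : S ⊆ A) (hS : ¬ IsCutSet A s t S) :
    ∃ x : V × V → ℝ, IsFeasibleFlow A s t Cap x ∧ (∀ a ∈ S, x a = 0) ∧
      0 < flowValue A s x ∧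
      ¬ (flowValue A s x ≤ ∑ a ∈ S, Cap a * (if a ∈ S then (0 : ℝ) else 1)) :=
  stmt_3_general A s t hst Cap hCap S hSA hS
end

section
/- Suppose the capacity function is integer-valued: Cap a = (n a : ℝ) for some n : A → ℕ. Then there exists a flow x* feasible for Cap such that x* a is a natural number (as a real) for every a ∈ A and value(x*) ≥ value(x) for every flow x feasible for Cap. In particular the maximum flow value is a natural number. -/
open Finset

section Flows

variable {V M : Type*} [DecidableEq V] [AddCommGroup M]

def netInflow (A : Finset (V × V)) (x : V × V → M) (v : V) : M :=
  ∑ a ∈ A with a.2 = v, x a - ∑ a ∈ A with a.1 = v, x a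

theorem netInflow_add (A : Finset (V × V)) (x y : V × V → M) (v : V) :
    netInflow A (x + y) v = netInflow A x v + netInflow A y v := by
  simp only [netInflow, Pi.add_apply, sum_add_distrib]
  abel

theorem netInflow_intCast (A : Finset (V × V)) (f : V × V → ℤ) (v : V) :
    netInflow A (fun a => (f a : ℝ)) v = netInflow A f v := by
  simp [netInflow]

theorem sum_netInflow (A : Finset (V × V)) (x : V × V → M) (S : Finset V) :
    ∑ v ∈ S, netInflow A x v =
      ∑ a ∈ A with a.2 ∈ S ∧ a.1 ∉ S, x a - ∑ a ∈ A with a.1 ∈ S ∧ a.2 ∉ S, x a := by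
  simp only [netInflow, sum_sub_distrib, sum_filter]
  rw [sum_comm, sum_comm (s := S)]
  simp only [sum_ite_eq, ← sum_sub_distrib]
  refine sum_congr rfl fun a _ => ?_
  by_cases h1 : a.1 ∈ S <;> by_cases h2 : a.2 ∈ S <;> simp [h1, h2]

theorem isFeasibleFlow_iff (A : Finset (V × V)) (s t : V) (c x : V × V → ℝ) :
    IsFeasibleFlow A s t c x ↔
      (∀ a ∈ A, 0 ≤ x a ∧ x a ≤ c a) ∧ ∀ v, v ≠ s → v ≠ t → netInflow A x v = 0 := by
  simp [IsFeasibleFlow, netInflow, sub_eq_zero]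

theorem flowValue_eq_neg_netInflow (A : Finset (V × V)) (s : V) (x : V × V → ℝ) :
    flowValue A s x = -netInflow A x s := by
  simp [flowValue, netInflow]

theorem flowValue_eq_cut {A : Finset (V × V)} {s t : V} {c x : V × V → ℝ}
    (hx : IsFeasibleFlow A s t c x) {S : Finset V} (hs : s ∈ S) (ht : t ∉ S) :
    flowValue A s x =
      ∑ a ∈ A with a.1 ∈ S ∧ a.2 ∉ S, x a - ∑ a ∈ A with a.2 ∈ S ∧ a.1 ∉ S, x a := by
  have hcons := ((isFeasibleFlow_iff A s t c x).1 hx).2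
  have : ∑ v ∈ S, netInflow A x v = netInflow A x s :=
    sum_eq_single_of_mem s hs fun v hv hvs => hcons v hvs (ne_of_mem_of_not_mem hv ht)
  rw [flowValue_eq_neg_netInflow, ← this, sum_netInflow, neg_sub]

theorem flowValue_le_cutCapacity {A : Finset (V × V)} {s t : V} {c x : V × V → ℝ}
    (hx : IsFeasibleFlow A s t c x) {S : Finset V} (hs : s ∈ S) (ht : t ∉ S) :
    flowValue A s x ≤ ∑ a ∈ A with a.1 ∈ S ∧ a.2 ∉ S, c a := by
  rw [flowValue_eq_cut hx hs ht]
  have hout : ∑ a ∈ A with a.1 ∈ S ∧ a.2 ∉ S, x a ≤ ∑ a ∈ A with a.1 ∈ S ∧ a.2 ∉ S, c a :=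
    sum_le_sum fun a ha => (hx.1 a (mem_filter.1 ha).1).2
  have hin : 0 ≤ ∑ a ∈ A with a.2 ∈ S ∧ a.1 ∉ S, x a :=
    sum_nonneg fun a ha => (hx.1 a (mem_filter.1 ha).1).1
  linarith

end Flows

def reachWithin {V : Type*} (r : V → V → Prop) (s : V) : ℕ → Set V
  | 0 => {s}
  | k + 1 => reachWithin r s k ∪ {w | ∃ u ∈ reachWithin r s k, r u w}

theorem reachWithin_subset_succ {V : Type*} (r : V → V → Prop) (s : V) (k : ℕ) :
    reachWithin r s k ⊆ reachWithin r s (k + 1) :=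
  Set.subset_union_left

theorem exists_mem_reachWithin_of_reflTransGen {V : Type*} {r : V → V → Prop} {s v : V}
    (h : Relation.ReflTransGen r s v) : ∃ k, v ∈ reachWithin r s k := by
  induction h with
  | refl => exact ⟨0, rfl⟩
  | tail _ huv ih =>
    obtain ⟨k, hk⟩ := ih
    exact ⟨k + 1, Or.inr ⟨_, hk, huv⟩⟩

section Residual

variable {V : Type*} [DecidableEq V] (A : Finset (V × V)) (c f : V × V → ℤ)

def ResidualArc (u v : V) : Prop :=
  ((u, v) ∈ A ∧ f (u, v) < c (u, v)) ∨ ((v, u) ∈ A ∧ 0 < f (v, u))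

def residualUnit (u v : V) : V × V → ℤ :=
  if (u, v) ∈ A ∧ f (u, v) < c (u, v) then Pi.single (u, v) 1 else Pi.single (v, u) (-1)

variable {A c f}

theorem residualUnit_apply_ne_zero {u v : V} {a : V × V} (h : residualUnit A c f u v a ≠ 0) :
    a = (u, v) ∨ a = (v, u) := by
  unfold residualUnit at h
  split_ifs at h <;> by_contra! hne <;> simp_all

theorem netInflow_residualUnit {u v : V} (h : ResidualArc A c f u v) (w : V) :
    netInflow A (residualUnit A c f u v) w =
      (if w = v then 1 else 0) - (if w = u then 1 else 0) := by
  by_cases hfw : (u, v) ∈ A ∧ f (u, v) < c (u, v)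
  · simp [residualUnit, hfw, netInflow, sum_pi_single', eq_comm]
  · have hb := h.resolve_left hfw
    simp only [residualUnit, hfw, if_false, netInflow, sum_pi_single', mem_filter, hb.1, true_and]
    by_cases hv : v = w <;> by_cases hu : u = w <;> simp [hv, hu, eq_comm]

theorem add_residualUnit_mem_Icc (hf : ∀ a, f a ∈ Set.Icc 0 (c a)) {u v : V}
    (h : ResidualArc A c f u v) (a : V × V) : f a + residualUnit A c f u v a ∈ Set.Icc 0 (c a) := by
  obtain ⟨h0, hc⟩ := hf a
  rw [Set.mem_Icc]
  by_cases hfw : (u, v) ∈ A ∧ f (u, v) < c (u, v)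
  · rw [residualUnit, if_pos hfw]
    by_cases ha : a = (u, v)
    · subst ha; rw [Pi.single_eq_same]; omega
    · rw [Pi.single_eq_of_ne ha]; omega
  · have hb := h.resolve_left hfw
    rw [residualUnit, if_neg hfw]
    by_cases ha : a = (v, u)
    · subst ha; rw [Pi.single_eq_same]; omega
    · rw [Pi.single_eq_of_ne ha]; omega

end Residual

section Augmentation

variable {V : Type*} [DecidableEq V] {A : Finset (V × V)} {c f : V × V → ℤ} {s : V}

theorem exists_augmentation_of_mem_reachWithin (hf : ∀ a, f a ∈ Set.Icc 0 (c a)) (k : ℕ) :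
    ∀ v ∈ reachWithin (ResidualArc A c f) s k, ∃ g : V × V → ℤ,
      (∀ a, f a + g a ∈ Set.Icc 0 (c a)) ∧
      (∀ w, netInflow A g w = (if w = v then 1 else 0) - (if w = s then 1 else 0)) ∧
      ∀ a, g a ≠ 0 → a.1 ∈ reachWithin (ResidualArc A c f) s k ∧
        a.2 ∈ reachWithin (ResidualArc A c f) s k := by
  induction k with
  | zero =>
    rintro v rfl
    exact ⟨0, by simpa using hf, fun w => by simp [netInflow], fun a ha => absurd rfl ha⟩
  | succ k ih =>
    have hmono := reachWithin_subset_succ (ResidualArc A c f) s k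
    intro v hv
    by_cases hvk : v ∈ reachWithin (ResidualArc A c f) s k
    · obtain ⟨g, hfg, hg, hsupp⟩ := ih v hvk
      exact ⟨g, hfg, hg, fun a ha => (hsupp a ha).imp (hmono ·) (hmono ·)⟩
    obtain ⟨u, hu, huv⟩ := hv.resolve_left hvk
    obtain ⟨g, hfg, hg, hsupp⟩ := ih u hu
    -- `v` first appears at step `k + 1`, so `g` vanishes on the arcs between `u` and `v`
    have hg0 : ∀ a, a = (u, v) ∨ a = (v, u) → g a = 0 := by
      rintro a ha
      by_contra hne
      rcases ha with rfl | rfl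
      exacts [hvk (hsupp _ hne).2, hvk (hsupp _ hne).1]
    refine ⟨g + residualUnit A c f u v, fun a => ?_, fun w => ?_, fun a ha => ?_⟩
    · by_cases ha : a = (u, v) ∨ a = (v, u)
      · simpa [hg0 a ha] using add_residualUnit_mem_Icc hf huv a
      · have hz : residualUnit A c f u v a = 0 :=
          by_contra fun h => ha (residualUnit_apply_ne_zero h)
        simpa [hz] using hfg a
    · rw [netInflow_add, hg, netInflow_residualUnit huv]
      ring
    · by_cases hga : g a = 0
      · have hv' : v ∈ reachWithin (ResidualArc A c f) s (k + 1) := hv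
        rcases residualUnit_apply_ne_zero (by simpa [hga] using ha) with rfl | rfl
        exacts [⟨hmono hu, hv'⟩, ⟨hv', hmono hu⟩]
      · exact (hsupp a hga).imp (hmono ·) (hmono ·)

end Augmentation

section IntegralFlow

variable {V : Type*} [DecidableEq V] {A : Finset (V × V)} {s t : V} {c f : V × V → ℤ}

def IsIntegralFlow (A : Finset (V × V)) (s t : V) (c f : V × V → ℤ) : Prop :=
  (∀ a, f a ∈ Set.Icc 0 (c a)) ∧ ∀ v, v ≠ s → v ≠ t → netInflow A f v = 0

theorem IsIntegralFlow.exists_netInflow_lt (hf : IsIntegralFlow A s t c f) (hst : s ≠ t)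
    (hreach : Relation.ReflTransGen (ResidualArc A c f) s t) :
    ∃ f', IsIntegralFlow A s t c f' ∧ netInflow A f' s < netInflow A f s := by
  obtain ⟨k, hk⟩ := exists_mem_reachWithin_of_reflTransGen hreach
  obtain ⟨g, hfg, hg, -⟩ := exists_augmentation_of_mem_reachWithin hf.1 k t hk
  refine ⟨f + g, ⟨hfg, fun v hvs hvt => ?_⟩, ?_⟩
  · rw [netInflow_add, hf.2 v hvs hvt, hg, if_neg hvt, if_neg hvs]
    rfl
  · rw [netInflow_add, hg, if_neg hst, if_pos rfl]
    omega

theorem exists_isIntegralFlow_forall_netInflow_le [Fintype V] (A : Finset (V × V)) (s t : V)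
    {c : V × V → ℤ} (hc : 0 ≤ c) : ∃ f, IsIntegralFlow A s t c f ∧
      ∀ f', IsIntegralFlow A s t c f' → netInflow A f s ≤ netInflow A f' s := by
  have hfin : {f | IsIntegralFlow A s t c f}.Finite :=
    (Set.Finite.pi fun a => Set.finite_Icc 0 (c a)).subset fun f hf => Set.mem_univ_pi.2 hf.1
  have hzero : IsIntegralFlow A s t c 0 :=
    ⟨fun a => ⟨le_rfl, hc a⟩, fun v _ _ => by simp [netInflow]⟩
  exact Set.exists_min_image _ (netInflow A · s) hfin ⟨0, hzero⟩

theorem IsIntegralFlow.isFeasibleFlow (hf : IsIntegralFlow A s t c f) :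
    IsFeasibleFlow A s t (fun a => (c a : ℝ)) (fun a => (f a : ℝ)) := by
  refine (isFeasibleFlow_iff _ _ _ _ _).2 ⟨fun a _ => ?_, fun v hvs hvt => ?_⟩
  · exact ⟨by exact_mod_cast (hf.1 a).1, by exact_mod_cast (hf.1 a).2⟩
  · rw [netInflow_intCast, hf.2 v hvs hvt, Int.cast_zero]

theorem IsIntegralFlow.flowValue_eq_cutCapacity (hf : IsIntegralFlow A s t c f) {S : Finset V}
    (hs : s ∈ S) (ht : t ∉ S) (hS : ∀ u v, u ∈ S → ResidualArc A c f u v → v ∈ S) :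
    flowValue A s (fun a => (f a : ℝ)) = ∑ a ∈ A with a.1 ∈ S ∧ a.2 ∉ S, (c a : ℝ) := by
  rw [flowValue_eq_cut hf.isFeasibleFlow hs ht]
  have hout : ∑ a ∈ A with a.1 ∈ S ∧ a.2 ∉ S, (f a : ℝ) =
      ∑ a ∈ A with a.1 ∈ S ∧ a.2 ∉ S, (c a : ℝ) := sum_congr rfl fun a ha => by
    obtain ⟨ha, h1, h2⟩ := mem_filter.1 ha
    rw [le_antisymm (hf.1 a).2 (not_lt.1 fun hlt => h2 (hS _ _ h1 (.inl ⟨ha, hlt⟩)))]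
  have hin : ∑ a ∈ A with a.2 ∈ S ∧ a.1 ∉ S, (f a : ℝ) = 0 := sum_eq_zero fun a ha => by
    obtain ⟨ha, h2, h1⟩ := mem_filter.1 ha
    rw [le_antisymm (not_lt.1 fun hpos => h1 (hS _ _ h2 (.inr ⟨ha, hpos⟩))) (hf.1 a).1,
      Int.cast_zero]
  rw [hout, hin, sub_zero]

end IntegralFlow

/-- If the capacities are integer-valued, there is an integer-valued maximum flow, and the
maximum flow value is a natural number. -/
theorem stmt_10 {V : Type*} [Fintype V] [DecidableEq V] (A : Finset (V × V)) (s t : V)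
    (hst : s ≠ t) (Cap : V × V → ℝ) (n : V × V → ℕ) (hCap : ∀ a, Cap a = (n a : ℝ)) :
    ∃ xstar : V × V → ℝ, IsFeasibleFlow A s t Cap xstar ∧
      (∀ a ∈ A, ∃ m : ℕ, xstar a = (m : ℝ)) ∧
      (∀ x : V × V → ℝ, IsFeasibleFlow A s t Cap x →
        flowValue A s x ≤ flowValue A s xstar) ∧
      ∃ m : ℕ, flowValue A s xstar = (m : ℝ) := by
  classical
  obtain rfl : Cap = fun a => ((n a : ℤ) : ℝ) := funext fun a => by simp [hCap]
  obtain ⟨f, hf, hmin⟩ := exists_isIntegralFlow_forall_netInflow_le A s t (c := fun a => (n a : ℤ))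
    fun a => Int.natCast_nonneg _
  set S := univ.filter (Relation.ReflTransGen (ResidualArc A (fun a => (n a : ℤ)) f) s)
  have hs : s ∈ S := mem_filter.2 ⟨mem_univ _, .refl⟩
  have ht : t ∉ S := fun ht => by
    obtain ⟨f', hf', hlt⟩ := hf.exists_netInflow_lt hst (by simpa [S] using ht)
    exact (hmin f' hf').not_gt hlt
  have hS : ∀ u v, u ∈ S → ResidualArc A _ f u v → v ∈ S := fun u v hu huv => by
    simp only [S, mem_filter, mem_univ, true_and] at hu ⊢
    exact hu.tail huv
  have hval := hf.flowValue_eq_cutCapacity hs ht hS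
  refine ⟨_, hf.isFeasibleFlow, fun a _ => ⟨(f a).toNat, ?_⟩, fun x hx => ?_,
    ∑ a ∈ A with a.1 ∈ S ∧ a.2 ∉ S, n a, by simpa using hval⟩
  · exact_mod_cast (Int.toNat_of_nonneg (hf.1 a).1).symm
  · exact hval ▸ flowValue_le_cutCapacity hx hs ht
end
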